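/- Let S and T be simple, locally finite hypergraphs, g : Γ_S(s) → Γ_T(t) an isomorphism of components with g(s) = t, f the induced vertex bijection, and c = f[s] ⊕ t. Then for every finite independent subset a of S, the set f[a] is independent in T. -/

import Mathlib

/-! Suppose an edge `e` of `T` satisfies `e ⊆ f[a]`, and put `A = f⁻¹[e] ⊆ a`. Delete from `s`
the closed neighbourhood of `A` (finite, by local finiteness) and add back the `v ∈ A` with
`f v ∉ c`: the result `r` is independent and differs from `s` in finitely many vertices, so it
lies in Γ_S(s). But `e ⊆ f[r] ⊕ c = g(r)`, contradicting the independence of `g(r)` in `T`. -/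

open scoped symmDiff

variable {V : Type*}

def Indep (E : Set (Finset V)) (s : Set V) : Prop := ∀ e ∈ E, ¬ ((e : Set V) ⊆ s)

def SimpleHG (E : Set (Finset V)) : Prop :=
  (∀ e ∈ E, 1 < e.card) ∧ ∀ e ∈ E, ∀ e' ∈ E, e ⊆ e' → e = e'

def LocFin (E : Set (Finset V)) : Prop := ∀ v : V, {e ∈ E | v ∈ e}.Finite

def Nbr (E : Set (Finset V)) (v w : V) : Prop := ∃ e ∈ E, v ∈ e ∧ w ∈ e

def Gamma (E : Set (Finset V)) : SimpleGraph {s : Set V // Indep E s} where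
  Adj s t := ∃ v, s.1 ∆ t.1 = {v}
  symm := ⟨fun s t ⟨v, h⟩ => ⟨v, by rwa [symmDiff_comm]⟩⟩
  loopless := ⟨fun s ⟨v, h⟩ => by
    rw [symmDiff_self] at h
    exact absurd h.symm (Set.singleton_ne_empty v)⟩

def Comp (E : Set (Finset V)) (s : Set V) : Set {t : Set V // Indep E t} :=
  {t | (s ∆ t.1).Finite}

def GammaComp (E : Set (Finset V)) (s : Set V) : SimpleGraph (Comp E s) :=
  (Gamma E).induce (Comp E s)

def xset (E : Set (Finset V)) (s : Set V) (v : V) : Set V :=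
  s \ insert v {w | Nbr E v w}

def yset (E : Set (Finset V)) (s : Set V) (v : V) : Set V :=
  insert v (xset E s v)

def IsIsoHG {V W : Type*} (ES : Set (Finset V)) (ET : Set (Finset W)) (f : V → W) : Prop :=
  Function.Bijective f ∧ ∀ e : Finset V, e ∈ ES ↔ ∃ e' ∈ ET, (e' : Set W) = f '' (e : Set V)

def closedNbhd (E : Set (Finset V)) (A : Set V) : Set V :=
  A ∪ {w | ∃ v ∈ A, Nbr E v w}

theorem Indep.mono {E : Set (Finset V)} {s t : Set V} (hs : Indep E s) (hts : t ⊆ s) :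
    Indep E t :=
  fun e he het => hs e he (het.trans hts)

theorem LocFin.finite_closedNbhd {E : Set (Finset V)} (hE : LocFin E) {A : Set V}
    (hA : A.Finite) : (closedNbhd E A).Finite := by
  refine hA.union ((hA.biUnion fun v _ => (hE v).biUnion fun e _ => e.finite_toSet).subset ?_)
  rintro w ⟨v, hv, e, he, hve, hwe⟩
  exact Set.mem_biUnion hv (Set.mem_biUnion (⟨he, hve⟩ : e ∈ {e ∈ E | v ∈ e}) hwe)

/-- An edge inside `s \ closedNbhd E A ∪ b` either meets `A`, and then lies in `b`,
or misses `A ⊇ b`, and then lies in `s`. -/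
theorem Indep.diff_closedNbhd_union {E : Set (Finset V)} {s A b : Set V} (hs : Indep E s)
    (hb : Indep E b) (hbA : b ⊆ A) : Indep E (s \ closedNbhd E A ∪ b) := by
  intro e he hsub
  by_cases hmeet : ∃ v ∈ e, v ∈ A
  · obtain ⟨v, hve, hvA⟩ := hmeet
    refine hb e he fun w hw => (hsub hw).resolve_left fun hws => hws.2 ?_
    exact Or.inr ⟨v, hvA, e, he, hve, hw⟩
  · push Not at hmeet
    exact hs e he fun w hw =>
      (hsub hw).elim (·.1) fun hwb => absurd (hbA hwb) (hmeet w hw)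

theorem symmDiff_diff_union_subset {α : Type*} (s U b : Set α) : s ∆ (s \ U ∪ b) ⊆ U ∪ b := by
  intro v hv
  rcases Set.mem_symmDiff.mp hv with ⟨hvs, hvr⟩ | ⟨hvr, hvs⟩
  · exact Or.inl (by_contra fun hvU => hvr (Or.inl ⟨hvs, hvU⟩))
  · exact hvr.elim (fun h => absurd h.1 hvs) Or.inr

theorem subset_image_diff_union_symmDiff {α β : Type*} {f : α → β} (hf : f.Injective)
    {e c : Set β} {s U : Set α} (he : e ⊆ Set.range f) (heU : f ⁻¹' e ⊆ U) :
    e ⊆ (f '' (s \ U ∪ {v ∈ f ⁻¹' e | f v ∉ c})) ∆ c := by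
  intro w hw
  obtain ⟨v, rfl⟩ := he hw
  by_cases hc : f v ∈ c
  · refine Or.inr ⟨hc, ?_⟩
    rintro ⟨u, hu, huv⟩
    obtain rfl := hf huv
    exact hu.elim (fun h => h.2 (heU hw)) fun h => h.2 hc
  · exact Or.inl ⟨⟨v, Or.inr ⟨hw, hc⟩, rfl⟩, hc⟩

theorem stmt18_general {VS VT : Type*} (ES : Set (Finset VS)) (ET : Set (Finset VT))
    (hSlf : LocFin ES)
    (s : Set VS) (t : Set VT) (hs : Indep ES s)
    (g : GammaComp ES s ≃g GammaComp ET t)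
    (f : VS → VT) (hfbij : Function.Bijective f)
    (hgr : ∀ r : Comp ES s, (g r).1.1 = (f '' r.1.1) ∆ ((f '' s) ∆ t)) :
    ∀ a : Set VS, a.Finite → Indep ES a → Indep ET (f '' a) := by
  intro a _ haI e he hea
  set A : Set VS := f ⁻¹' (e : Set VT)
  set b : Set VS := {v ∈ A | f v ∉ (f '' s) ∆ t}
  have hA : A.Finite := e.finite_toSet.preimage hfbij.1.injOn
  have hAa : A ⊆ a := fun v hv => hfbij.1.mem_set_image.mp (hea hv)
  have hrI : Indep ES (s \ closedNbhd ES A ∪ b) :=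
    hs.diff_closedNbhd_union (haI.mono (Set.sep_subset _ _ |>.trans hAa)) (Set.sep_subset _ _)
  have hrC : (⟨_, hrI⟩ : {u : Set VS // Indep ES u}) ∈ Comp ES s :=
    ((hSlf.finite_closedNbhd hA).union (hA.subset (Set.sep_subset _ _))).subset
      (symmDiff_diff_union_subset _ _ _)
  have heg : (e : Set VT) ⊆ (g ⟨⟨_, hrI⟩, hrC⟩).1.1 := by
    rw [hgr]
    exact subset_image_diff_union_symmDiff hfbij.1 (hea.trans (Set.image_subset_range f a))
      Set.subset_union_left
  exact (g ⟨⟨_, hrI⟩, hrC⟩).1.2 e he heg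

theorem stmt18 {VS VT : Type*} (ES : Set (Finset VS)) (ET : Set (Finset VT))
    (hSsimp : SimpleHG ES) (hTsimp : SimpleHG ET) (hSlf : LocFin ES) (hTlf : LocFin ET)
    (s : Set VS) (t : Set VT) (hs : Indep ES s) (ht : Indep ET t)
    (g : GammaComp ES s ≃g GammaComp ET t)
    (hsC : (⟨s, hs⟩ : {u : Set VS // Indep ES u}) ∈ Comp ES s)
    (hgst : (g ⟨⟨s, hs⟩, hsC⟩).1.1 = t)
    (f : VS → VT) (hfbij : Function.Bijective f)
    (hf : ∀ (v : VS) (hxI : Indep ES (xset ES s v)) (hyI : Indep ES (yset ES s v))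
      (hxC : (⟨xset ES s v, hxI⟩ : {u : Set VS // Indep ES u}) ∈ Comp ES s)
      (hyC : (⟨yset ES s v, hyI⟩ : {u : Set VS // Indep ES u}) ∈ Comp ES s),
      (g ⟨⟨xset ES s v, hxI⟩, hxC⟩).1.1 ∆ (g ⟨⟨yset ES s v, hyI⟩, hyC⟩).1.1 = {f v})
    (hgr : ∀ r : Comp ES s, (g r).1.1 = (f '' r.1.1) ∆ ((f '' s) ∆ t)) :
    ∀ a : Set VS, a.Finite → Indep ES a → Indep ET (f '' a) :=
  stmt18_general ES ET hSlf s t hs g f hfbij hgr
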